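/- Hypergradient formula: under the assumptions below, the composite objective F(θ) = g(x*(θ), θ) is differentiable with ∇F(θ) = ∇_θ g(x*(θ), θ) − (∇²_{xθ} f(x*(θ), θ))ᵀ (∇²_{xx} f(x*(θ), θ))⁻¹ ∇_x g(x*(θ), θ). -/

import Mathlib

/-!
The gradient map `(θ, x) ↦ ∂ₓf(x, θ)` vanishes exactly on the graph of `x*`: at a minimizer the
derivative vanishes, and a critical point of the convex function `f (·, θ)` is a minimizer, hence
equal to `x*(θ)`. Strong convexity makes `∂ₓf` strongly monotone, so its derivative in `x`, the
Hessian `∇²ₓₓf`, is coercive and therefore invertible (Lax–Milgram). The implicit function theorem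
then gives `Dx* = -(∇²ₓₓf)⁻¹ ∇²ₓθf`, and the chain rule for `F θ = g (x* θ) θ` yields the formula
once the operators are written in the standard bases.
-/

open Set Filter Topology

section FirstOrder

variable {E : Type*} [NormedAddCommGroup E] [NormedSpace ℝ E]

theorem HasFDerivAt.hasDerivAt_comp_add_smul {F : Type*} [NormedAddCommGroup F]
    [NormedSpace ℝ F] {h : E → F} {h' : E →L[ℝ] F} {x : E} (hd : HasFDerivAt h h' x) (v : E) :
    HasDerivAt (fun t : ℝ => h (x + t • v)) (h' v) 0 := by
  have hline : HasDerivAt (fun t : ℝ => x + t • v) v 0 := by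
    simpa using ((hasDerivAt_id (0 : ℝ)).smul_const v).const_add x
  exact (by simpa using hd : HasFDerivAt h h' (x + (0 : ℝ) • v)).comp_hasDerivAt 0 hline

theorem ConvexOn.add_fderiv_sub_le {s : Set E} {h : E → ℝ} {h' : E →L[ℝ] ℝ} {x y : E}
    (hh : ConvexOn ℝ s h) (hx : x ∈ s) (hy : y ∈ s) (hd : HasFDerivAt h h' x) :
    h x + h' (y - x) ≤ h y := by
  set k : ℝ → ℝ := fun t => h (x + t • (y - x)) - t * (h y - h x)
  have hk : HasDerivAt k (h' (y - x) - (h y - h x)) 0 :=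
    (hd.hasDerivAt_comp_add_smul (y - x)).sub (hasDerivAt_mul_const (h y - h x))
  have hmax : IsLocalMaxOn k (Icc 0 1) 0 := by
    refine eventually_nhdsWithin_of_forall fun t ⟨ht₀, ht₁⟩ => ?_
    have hseg := hh.2 hx hy (sub_nonneg.2 ht₁) ht₀ (sub_add_cancel 1 t)
    have hpt : (1 - t) • x + t • y = x + t • (y - x) := by module
    simp only [k, hpt, smul_eq_mul] at hseg ⊢
    simp only [zero_smul, add_zero, zero_mul, sub_zero]
    linarith
  have hseg : segment ℝ 0 (0 + 1) ⊆ Icc (0 : ℝ) 1 := by simp [segment_eq_Icc]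
  have := hmax.hasFDerivWithinAt_nonpos hk.hasFDerivAt.hasFDerivWithinAt
    (mem_posTangentConeAt_of_segment_subset hseg)
  simp only [ContinuousLinearMap.toSpanSingleton_apply, one_smul] at this
  linarith

theorem ConvexOn.fderiv_eq_zero_iff {h : E → ℝ} {x₀ x : E} (hconv : ConvexOn ℝ univ h)
    (hd : DifferentiableAt ℝ h x) (hmin : ∀ y, h x₀ ≤ h y)
    (huniq : ∀ x, (∀ y, h x ≤ h y) → x = x₀) :
    fderiv ℝ h x = 0 ↔ x = x₀ := by
  refine ⟨fun h0 => huniq x fun y => ?_,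
    fun hx => hx ▸ IsLocalMin.fderiv_eq_zero (Eventually.of_forall hmin)⟩
  simpa [h0] using hconv.add_fderiv_sub_le trivial trivial hd.hasFDerivAt (y := y)

theorem mul_sq_norm_le_of_hasFDerivAt {μ : ℝ} {φ : E → E →L[ℝ] ℝ}
    {φ' : E →L[ℝ] E →L[ℝ] ℝ} {x : E} (hφ : ∀ y z, μ * ‖z - y‖ ^ 2 ≤ (φ z - φ y) (z - y))
    (hφ' : HasFDerivAt φ φ' x) (v : E) : μ * ‖v‖ ^ 2 ≤ φ' v v := by
  set k : ℝ → ℝ := fun t => φ (x + t • v) v - t * (μ * ‖v‖ ^ 2)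
  have hk : HasDerivAt k (φ' v v - μ * ‖v‖ ^ 2) 0 :=
    ((hφ'.hasDerivAt_comp_add_smul v).clm_apply (hasDerivAt_const 0 v)).sub
      (hasDerivAt_mul_const _) |>.congr_deriv (by simp)
  have hmin : IsLocalMinOn k (Ici 0) 0 := by
    refine eventually_nhdsWithin_of_forall fun t (ht : 0 ≤ t) => ?_
    have hmono := hφ x (x + t • v)
    simp only [add_sub_cancel_left, map_smul, norm_smul, Real.norm_of_nonneg ht,
      smul_eq_mul] at hmono
    simp only [k, zero_smul, add_zero, zero_mul, sub_zero, sub_apply] at hmono ⊢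
    rcases ht.eq_or_lt with rfl | ht
    · simp
    have : t * (μ * ‖v‖ ^ 2) ≤ φ (x + t • v) v - φ x v :=
      le_of_mul_le_mul_left (by linarith) ht
    linarith
  have hseg : segment ℝ 0 (0 + 1) ⊆ Ici (0 : ℝ) := by simp [segment_eq_Icc, Icc_subset_Ici_self]
  have := hmin.hasFDerivWithinAt_nonneg hk.hasFDerivAt.hasFDerivWithinAt
    (mem_posTangentConeAt_of_segment_subset hseg)
  simp only [ContinuousLinearMap.toSpanSingleton_apply, one_smul] at this
  linarith

end FirstOrder

theorem StrongConvexOn.mul_sq_norm_sub_le {E : Type*} [NormedAddCommGroup E]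
    [InnerProductSpace ℝ E] {s : Set E} {μ : ℝ} {h : E → ℝ} {h'x h'y : E →L[ℝ] ℝ} {x y : E}
    (hh : StrongConvexOn s μ h) (hx : x ∈ s) (hy : y ∈ s) (hdx : HasFDerivAt h h'x x)
    (hdy : HasFDerivAt h h'y y) :
    μ * ‖y - x‖ ^ 2 ≤ (h'y - h'x) (y - x) := by
  have hconv := strongConvexOn_iff_convex.1 hh
  have hd {z : E} {h'z : E →L[ℝ] ℝ} (hz : HasFDerivAt h h'z z) :
      HasFDerivAt (fun x => h x - μ / 2 * ‖x‖ ^ 2) (h'z - (μ / 2) • 2 • innerSL ℝ z) z :=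
    hz.sub ((hasStrictFDerivAt_norm_sq z).hasFDerivAt.const_smul (μ / 2))
  have h₁ := hconv.add_fderiv_sub_le hx hy (hd hdx)
  have h₂ := hconv.add_fderiv_sub_le hy hx (hd hdy)
  have hsq : ‖y - x‖ ^ 2 = inner ℝ y (y - x) - inner ℝ x (y - x) := by
    rw [← inner_sub_left, real_inner_self_eq_norm_sq]
  rw [← neg_sub y x] at h₂
  simp only [sub_apply, smul_apply, innerSL_apply_apply, map_neg, Nat.cast_ofNat,
    smul_eq_mul, nsmul_eq_mul] at h₁ h₂ ⊢
  rw [hsq]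
  linarith

theorem IsCoercive.isInvertible {V : Type*} [NormedAddCommGroup V] [InnerProductSpace ℝ V]
    [CompleteSpace V] {B : V →L[ℝ] V →L[ℝ] ℝ} (hB : IsCoercive B) : B.IsInvertible :=
  ⟨hB.continuousLinearEquivOfBilin.trans (InnerProductSpace.toDual ℝ V).toContinuousLinearEquiv,
    by ext v w; simp⟩

open Matrix

theorem Module.Basis.apply_inverse_apply_eq_dotProduct {𝕜 : Type*} [NontriviallyNormedField 𝕜]
    {E : Type*} [NormedAddCommGroup E] [NormedSpace 𝕜 E] {ι : Type*} [Fintype ι] [DecidableEq ι]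
    (b : Module.Basis ι 𝕜 E) {A : E →L[𝕜] E →L[𝕜] 𝕜} (hA : A.IsInvertible) (c ℓ : E →L[𝕜] 𝕜) :
    c (A.inverse ℓ) = (fun k => ℓ (b k)) ⬝ᵥ
      ((Matrix.of fun i j => A (b i) (b j))⁻¹ *ᵥ fun i => c (b i)) := by
  set H := Matrix.of fun i j => A (b i) (b j)
  have hcoord (x : E) (φ : E →L[𝕜] 𝕜) : φ x = b.repr x ⬝ᵥ fun i => φ (b i) := by
    conv_lhs => rw [← b.sum_repr x]
    simp only [map_sum, map_smul, smul_eq_mul, dotProduct]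
  have hvecMul (x : E) : b.repr x ᵥ* H = fun k => A x (b k) := by
    ext k
    rw [show A x (b k) = A.flip (b k) x from rfl, hcoord]
    rfl
  have hH : IsUnit H := by
    refine vecMul_injective_iff_isUnit.1 fun v w hvw => b.equivFun.symm.injective ?_
    rw [← b.equivFun.apply_symm_apply v, ← b.equivFun.apply_symm_apply w] at hvw
    simp only [Module.Basis.equivFun_apply, hvecMul] at hvw
    exact hA.injective (ContinuousLinearMap.coe_injective (b.ext fun k => congrFun hvw k))
  calc c (A.inverse ℓ)
      = b.repr (A.inverse ℓ) ⬝ᵥ (H *ᵥ (H⁻¹ *ᵥ fun i => c (b i))) := by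
        rw [mulVec_mulVec, mul_nonsing_inv _ ((isUnit_iff_isUnit_det H).1 hH), one_mulVec,
          hcoord]
    _ = (fun k => ℓ (b k)) ⬝ᵥ (H⁻¹ *ᵥ fun i => c (b i)) := by
        rw [dotProduct_mulVec, hvecMul, hA.self_apply_inverse]

theorem hasStrictFDerivAt_of_apply_eq_zero_iff {𝕜 : Type*} [NontriviallyNormedField 𝕜]
    {E₁ : Type*} [NormedAddCommGroup E₁] [NormedSpace 𝕜 E₁] [CompleteSpace E₁]
    {E₂ : Type*} [NormedAddCommGroup E₂] [NormedSpace 𝕜 E₂] [CompleteSpace E₂]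
    {F : Type*} [NormedAddCommGroup F] [NormedSpace 𝕜 F] [CompleteSpace F]
    {Φ : E₁ × E₂ → F} {Φ' : E₁ × E₂ →L[𝕜] F} {ξ : E₁ → E₂} {θ : E₁}
    (hΦ : HasStrictFDerivAt Φ Φ' (θ, ξ θ)) (hinv : (Φ' ∘L .inr 𝕜 E₁ E₂).IsInvertible)
    (hξ : ∀ t y, Φ (t, y) = 0 ↔ y = ξ t) :
    HasStrictFDerivAt ξ (-(Φ' ∘L .inr 𝕜 E₁ E₂).inverse ∘L (Φ' ∘L .inl 𝕜 E₁ E₂)) θ := by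
  refine (hΦ.hasStrictFDerivAt_implicitFunctionOfProdDomain hinv).congr_of_eventuallyEq ?_
  filter_upwards [hΦ.eventually_apply_implicitFunctionOfProdDomain hinv] with t ht
  rw [(hξ θ _).2 rfl] at ht
  exact (hξ t _).1 ht

section PartialDeriv

variable (𝕜 : Type*) [NontriviallyNormedField 𝕜]
  {E : Type*} [NormedAddCommGroup E] [NormedSpace 𝕜 E]
  {P : Type*} [NormedAddCommGroup P] [NormedSpace 𝕜 P]
  {F : Type*} [NormedAddCommGroup F] [NormedSpace 𝕜 F]
  {G : Type*} [NormedAddCommGroup G] [NormedSpace 𝕜 G]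

/-- `∂ₓ f (x, θ)` as a function of `(θ, x)`: the implicit function theorem solves for the second
component. -/
noncomputable def partialFDeriv (f : E → P → F) (p : P × E) : E →L[𝕜] F :=
  fderiv 𝕜 (fun x => f x p.1) p.2

variable {𝕜}

theorem contDiff_partialFDeriv {n : WithTop ℕ∞} {f : E → P → F}
    (hf : ContDiff 𝕜 (n + 1) fun p : E × P => f p.1 p.2) :
    ContDiff 𝕜 n (partialFDeriv 𝕜 f) := by
  have hd := hf.differentiable (by simp)
  have heq : partialFDeriv 𝕜 f =
      fun p => fderiv 𝕜 (fun p : E × P => f p.1 p.2) (p.2, p.1) ∘L .inl 𝕜 E P := by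
    funext p
    exact ((hd _).hasFDerivAt.comp p.2 (hasFDerivAt_prodMk_left p.2 p.1)).fderiv
  rw [heq]
  exact (ContinuousLinearMap.compL 𝕜 E (E × P) F).flip (.inl 𝕜 E P) |>.contDiff.comp <|
    (hf.fderiv_right le_rfl).comp (contDiff_snd.prodMk contDiff_fst)

theorem HasFDerivAt.fderiv_clm_apply_const {c : E → F →L[𝕜] G} {c' : E →L[𝕜] F →L[𝕜] G}
    {x : E} (hc : HasFDerivAt c c' x) (v : F) (w : E) :
    fderiv 𝕜 (fun y => c y v) x w = c' w v := by
  simp [(hc.clm_apply (hasFDerivAt_const v x)).fderiv]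

theorem fderiv_fderiv_apply_eq_fderiv_partialFDeriv_inr {f : E → P → F} {θ : P} {x : E}
    (hf : DifferentiableAt 𝕜 (partialFDeriv 𝕜 f) (θ, x)) (v w : E) :
    fderiv 𝕜 (fun y => fderiv 𝕜 (f · θ) y v) x w =
      fderiv 𝕜 (partialFDeriv 𝕜 f) (θ, x) (0, w) v :=
  (hf.hasFDerivAt.comp x (hasFDerivAt_prodMk_right θ x)).fderiv_clm_apply_const v w

theorem fderiv_fderiv_apply_eq_fderiv_partialFDeriv_inl {f : E → P → F} {θ : P} {x : E}
    (hf : DifferentiableAt 𝕜 (partialFDeriv 𝕜 f) (θ, x)) (v : E) (w : P) :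
    fderiv 𝕜 (fun t => fderiv 𝕜 (f · t) x v) θ w =
      fderiv 𝕜 (partialFDeriv 𝕜 f) (θ, x) (w, 0) v :=
  (hf.hasFDerivAt.comp θ (f := (·, x)) (hasFDerivAt_prodMk_left θ x)).fderiv_clm_apply_const v w

theorem hasFDerivAt_total_deriv {g : E → P → G} {ξ : P → E} {ξ' : P →L[𝕜] E} {θ : P}
    (hg : DifferentiableAt 𝕜 (fun p : E × P => g p.1 p.2) (ξ θ, θ)) (hξ : HasFDerivAt ξ ξ' θ) :
    HasFDerivAt (fun t => g (ξ t) t) (fderiv 𝕜 (g · θ) (ξ θ) ∘L ξ' + fderiv 𝕜 (g (ξ θ)) θ) θ := by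
  set G' := fderiv 𝕜 (fun p : E × P => g p.1 p.2) (ξ θ, θ)
  have hG : HasFDerivAt (fun p : E × P => g p.1 p.2) G' (ξ θ, θ) := hg.hasFDerivAt
  have hx : fderiv 𝕜 (g · θ) (ξ θ) = G' ∘L .inl 𝕜 E P :=
    (hG.comp (ξ θ) (f := (·, θ)) (hasFDerivAt_prodMk_left (ξ θ) θ)).fderiv
  have hθ : fderiv 𝕜 (g (ξ θ)) θ = G' ∘L .inr 𝕜 E P :=
    (hG.comp θ (hasFDerivAt_prodMk_right (ξ θ) θ)).fderiv
  refine (hG.comp θ (f := fun t => (ξ t, t)) (hξ.prodMk (hasFDerivAt_id θ))).congr_fderiv ?_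
  ext v
  simp [hx, hθ, ← map_add]

end PartialDeriv

section Argmin

variable {E : Type*} [NormedAddCommGroup E] [InnerProductSpace ℝ E]
  {P : Type*} [NormedAddCommGroup P] [NormedSpace ℝ P]
  {f : E → P → ℝ} {μ : ℝ}

theorem isCoercive_fderiv_partialFDeriv_comp_inr (hμ : 0 < μ)
    (hf : ContDiff ℝ 2 fun p : E × P => f p.1 p.2) (hsc : ∀ θ, StrongConvexOn univ μ (f · θ))
    (p : P × E) : IsCoercive (fderiv ℝ (partialFDeriv ℝ f) p ∘L .inr ℝ P E) := by
  obtain ⟨θ, x⟩ := p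
  have hfθ : Differentiable ℝ (f · θ) :=
    (hf.differentiable (by norm_num)).comp (differentiable_id.prodMk (differentiable_const θ))
  have hmono (y z : E) :
      μ * ‖z - y‖ ^ 2 ≤ (partialFDeriv ℝ f (θ, z) - partialFDeriv ℝ f (θ, y)) (z - y) :=
    (hsc θ).mul_sq_norm_sub_le trivial trivial (hfθ y).hasFDerivAt (hfθ z).hasFDerivAt
  have hderiv : HasFDerivAt (fun x => partialFDeriv ℝ f (θ, x))
      (fderiv ℝ (partialFDeriv ℝ f) (θ, x) ∘L .inr ℝ P E) x :=
    ((contDiff_partialFDeriv (n := 1) hf).differentiable one_ne_zero _).hasFDerivAt.comp x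
      (hasFDerivAt_prodMk_right θ x)
  refine ⟨μ, hμ, fun v => ?_⟩
  simpa [mul_assoc, sq] using mul_sq_norm_le_of_hasFDerivAt hmono hderiv v

variable [CompleteSpace E] [CompleteSpace P]

theorem hasStrictFDerivAt_argmin (hμ : 0 < μ) (hf : ContDiff ℝ 2 fun p : E × P => f p.1 p.2)
    (hsc : ∀ θ, StrongConvexOn univ μ (f · θ)) {xstar : P → E}
    (hmin : ∀ θ x, f (xstar θ) θ ≤ f x θ) (huniq : ∀ θ x, (∀ y, f x θ ≤ f y θ) → x = xstar θ)
    (θ : P) :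
    HasStrictFDerivAt xstar
      (-(fderiv ℝ (partialFDeriv ℝ f) (θ, xstar θ) ∘L .inr ℝ P E).inverse ∘L
        (fderiv ℝ (partialFDeriv ℝ f) (θ, xstar θ) ∘L .inl ℝ P E)) θ := by
  refine hasStrictFDerivAt_of_apply_eq_zero_iff (Φ := partialFDeriv ℝ f) ?_
    (isCoercive_fderiv_partialFDeriv_comp_inr hμ hf hsc _).isInvertible fun t y => ?_
  · exact (contDiff_partialFDeriv (n := 1) hf).contDiffAt.hasStrictFDerivAt one_ne_zero
  · exact ((hsc t).convexOn fun r => by positivity).fderiv_eq_zero_iff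
      (((hf.differentiable (by norm_num)).comp
        (differentiable_id.prodMk (differentiable_const t))) y) (hmin t) (huniq t)

end Argmin

/-- Hypergradient formula: with `x* θ` the unique minimizer of the `μ`-strongly convex
`C²` inner objective `f (·, θ)` and `g` a `C¹` outer objective, the composite
`F θ = g (x* θ) θ` is differentiable with
`∇F(θ) = ∇_θ g − (∇²ₓθ f)ᵀ (∇²ₓₓ f)⁻¹ ∇ₓ g` evaluated at `(x* θ, θ)`. -/
theorem hypergradient_formula {n m : ℕ}
    (f : EuclideanSpace ℝ (Fin n) → EuclideanSpace ℝ (Fin m) → ℝ)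
    (g : EuclideanSpace ℝ (Fin n) → EuclideanSpace ℝ (Fin m) → ℝ) (μ : ℝ) (hμ : 0 < μ)
    (hf : ContDiff ℝ 2 (fun p : EuclideanSpace ℝ (Fin n) × EuclideanSpace ℝ (Fin m) => f p.1 p.2))
    (hg : ContDiff ℝ 1 (fun p : EuclideanSpace ℝ (Fin n) × EuclideanSpace ℝ (Fin m) => g p.1 p.2))
    (hsc : ∀ θ, StrongConvexOn Set.univ μ (fun x => f x θ))
    (xstar : EuclideanSpace ℝ (Fin m) → EuclideanSpace ℝ (Fin n))
    (hmin : ∀ θ x, f (xstar θ) θ ≤ f x θ)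
    (huniq : ∀ θ x, (∀ y, f x θ ≤ f y θ) → x = xstar θ)
    (Hxx : EuclideanSpace ℝ (Fin m) → Matrix (Fin n) (Fin n) ℝ)
    (hHxx : ∀ θ i j, Hxx θ i j =
      fderiv ℝ (fun x => fderiv ℝ (fun x' => f x' θ) x (EuclideanSpace.single j 1))
        (xstar θ) (EuclideanSpace.single i 1))
    (Hxθ : EuclideanSpace ℝ (Fin m) → Matrix (Fin n) (Fin m) ℝ)
    (hHxθ : ∀ θ i j, Hxθ θ i j =
      fderiv ℝ (fun t => fderiv ℝ (fun x' => f x' t) (xstar θ) (EuclideanSpace.single i 1))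
        θ (EuclideanSpace.single j 1))
    (gradxg : EuclideanSpace ℝ (Fin m) → Fin n → ℝ)
    (hgradxg : ∀ θ i, gradxg θ i =
      fderiv ℝ (fun x => g x θ) (xstar θ) (EuclideanSpace.single i 1))
    (gradθg : EuclideanSpace ℝ (Fin m) → Fin m → ℝ)
    (hgradθg : ∀ θ j, gradθg θ j =
      fderiv ℝ (fun t => g (xstar θ) t) θ (EuclideanSpace.single j 1))
    (F : EuclideanSpace ℝ (Fin m) → ℝ) (hF : ∀ θ, F θ = g (xstar θ) θ) :
    Differentiable ℝ F ∧
      ∀ θ j, fderiv ℝ F θ (EuclideanSpace.single j 1) =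
        gradθg θ j - (Matrix.mulVec (Matrix.transpose (Hxθ θ)) (Matrix.mulVec (Hxx θ)⁻¹ (gradxg θ))) j := by
  have hFderiv (θ : EuclideanSpace ℝ (Fin m)) :=
    (hasFDerivAt_total_deriv ((hg.differentiable one_ne_zero) _)
      (hasStrictFDerivAt_argmin hμ hf hsc hmin huniq θ).hasFDerivAt).congr_of_eventuallyEq
        (.of_forall hF)
  refine ⟨fun θ => (hFderiv θ).differentiableAt, fun θ j => ?_⟩
  set H := fderiv ℝ (partialFDeriv ℝ f) (θ, xstar θ)
  have hH : DifferentiableAt ℝ (partialFDeriv ℝ f) (θ, xstar θ) :=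
    (contDiff_partialFDeriv (n := 1) hf).differentiable one_ne_zero _
  have hHxx_eq : Hxx θ = .of fun i k => (H ∘L .inr ℝ _ _)
      (EuclideanSpace.single i 1) (EuclideanSpace.single k 1) := by
    ext i k
    simp [H, hHxx, fderiv_fderiv_apply_eq_fderiv_partialFDeriv_inr hH]
  have hHxθ_col : (fun k => Hxθ θ k j) = fun k =>
      (H ∘L .inl ℝ _ _) (EuclideanSpace.single j 1) (EuclideanSpace.single k 1) := by
    ext k
    simp [H, hHxθ, fderiv_fderiv_apply_eq_fderiv_partialFDeriv_inl hH]
  have hsolve := (EuclideanSpace.basisFun (Fin n) ℝ).toBasis.apply_inverse_apply_eq_dotProduct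
    (isCoercive_fderiv_partialFDeriv_comp_inr hμ hf hsc (θ, xstar θ)).isInvertible
    (fderiv ℝ (g · θ) (xstar θ)) ((H ∘L .inl ℝ _ _) (EuclideanSpace.single j 1))
  rw [(hFderiv θ).fderiv, hgradθg, hHxx_eq, funext (hgradxg θ)]
  simp only [OrthonormalBasis.coe_toBasis, EuclideanSpace.basisFun_apply,
    _root_.add_apply, ContinuousLinearMap.coe_comp, Function.comp_apply, _root_.neg_apply,
    map_neg] at hsolve hHxθ_col ⊢
  rw [hsolve, ← hHxθ_col, sub_eq_neg_add]
  rfl
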